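/- arXiv:2004.12282 — 2 statements merged into one kernel-verified Lean document; each statement's English description precedes it below -/
import Mathlib

section
/- Let E be an m×n real matrix of rank r with SVD-partition U = [U₁ U₂], V = [V₁ V₂], S. Let A_xx be an m×n real matrix and A_xv an m×v real matrix. If the matrix U₂ᵀ·[A_xx·V₂ A_xv] (the horizontal concatenation of U₂ᵀA_xxV₂ and U₂ᵀA_xv) has full column rank, then the stacked matrix col{U₂ᵀ·A_xx, V₁ᵀ} has full column rank. -/
open Matrix

noncomputable section

/-- A real matrix has full column rank (FCR) iff its rank equals its number of columns. -/
def FCR {m n : Type*} [Fintype m] [Fintype n] (A : Matrix m n ℝ) : Prop :=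
  A.rank = Fintype.card n

/-- A real matrix has full row rank (FRR) iff its rank equals its number of rows. -/
def FRR {m n : Type*} [Fintype m] [Fintype n] (A : Matrix m n ℝ) : Prop :=
  A.rank = Fintype.card m

/-- `E` is an `m × n` real matrix of rank `r` with SVD-partition
`U = [U₁ U₂]`, `V = [V₁ V₂]`, `S`: the matrices `U = [U₁ U₂]` and `V = [V₁ V₂]` are
orthogonal, `S` is an `r × r` diagonal matrix with positive diagonal entries,
and `E = U₁ * S * V₁ᵀ`. -/
def IsSVDPartition {m n r : ℕ} (E : Matrix (Fin m) (Fin n) ℝ)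
    (U₁ : Matrix (Fin m) (Fin r) ℝ) (U₂ : Matrix (Fin m) (Fin (m - r)) ℝ)
    (V₁ : Matrix (Fin n) (Fin r) ℝ) (V₂ : Matrix (Fin n) (Fin (n - r)) ℝ)
    (S : Matrix (Fin r) (Fin r) ℝ) : Prop :=
  r ≤ m ∧ r ≤ n ∧
    (Matrix.fromCols U₁ U₂)ᵀ * Matrix.fromCols U₁ U₂ = 1 ∧
    (Matrix.fromCols V₁ V₂)ᵀ * Matrix.fromCols V₁ V₂ = 1 ∧
    (∃ d : Fin r → ℝ, (∀ i, 0 < d i) ∧ S = Matrix.diagonal d) ∧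
    E = U₁ * S * V₁ᵀ ∧ E.rank = r

/-!
Orthogonality of `[V₁ V₂]` gives `V₁V₁ᵀ + V₂V₂ᵀ = 1`, so a vector `x` with `V₁ᵀx = 0` is
`x = V₂y` for `y = V₂ᵀx`. If moreover `U₂ᵀA_xx x = 0`, then `U₂ᵀA_xxV₂ y = 0`; the columns of
`U₂ᵀA_xxV₂` are among those of `U₂ᵀ[A_xxV₂  A_xv]`, hence `y = 0` and `x = 0`.
-/

variable {m n k₁ k₂ : Type*} [Fintype m] [Fintype n] [Fintype k₁] [Fintype k₂]

theorem fcr_iff_mulVec_eq_zero (A : Matrix m n ℝ) : FCR A ↔ ∀ v, A *ᵥ v = 0 → v = 0 := by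
  rw [← Matrix.ker_mulVecLin_eq_bot_iff, ← Submodule.finrank_eq_zero, FCR, Matrix.rank,
    ← Module.finrank_fintype_fun_eq_card ℝ]
  have := LinearMap.finrank_range_add_finrank_ker A.mulVecLin
  omega

theorem FCR.of_fromCols_left {M : Matrix m k₁ ℝ} {C : Matrix m k₂ ℝ}
    (h : FCR (fromCols M C)) : FCR M := by
  rw [fcr_iff_mulVec_eq_zero] at h ⊢
  intro x hx
  have := h (Sum.elim x 0) (by rw [fromCols_mulVec_sumElim, hx, mulVec_zero, add_zero])
  exact funext fun i => congrFun this (Sum.inl i)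

theorem mul_transpose_add_mul_transpose_eq_one [DecidableEq n] [DecidableEq k₁] [DecidableEq k₂]
    (e : n ≃ k₁ ⊕ k₂) {V₁ : Matrix n k₁ ℝ} {V₂ : Matrix n k₂ ℝ}
    (hV : (fromCols V₁ V₂)ᵀ * fromCols V₁ V₂ = 1) :
    V₁ * V₁ᵀ + V₂ * V₂ᵀ = 1 := by
  rw [transpose_fromCols] at hV
  rw [← fromCols_mul_fromRows]
  exact (fromCols_mul_fromRows_eq_one_comm e V₁ V₂ V₁ᵀ V₂ᵀ).mpr hV

theorem fcr_fromRows_transpose_of_fcr_mul [DecidableEq n] {A : Matrix m n ℝ} {V₁ : Matrix n k₁ ℝ}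
    {V₂ : Matrix n k₂ ℝ} (hV : V₁ * V₁ᵀ + V₂ * V₂ᵀ = 1) (hA : FCR (A * V₂)) :
    FCR (fromRows A V₁ᵀ) := by
  rw [fcr_iff_mulVec_eq_zero] at hA ⊢
  intro x hx
  rw [fromRows_mulVec] at hx
  have hAx : A *ᵥ x = 0 := congrArg (· ∘ Sum.inl) hx
  have hV₁x : V₁ᵀ *ᵥ x = 0 := congrArg (· ∘ Sum.inr) hx
  have hx_eq : V₂ *ᵥ (V₂ᵀ *ᵥ x) = x :=
    calc V₂ *ᵥ (V₂ᵀ *ᵥ x) = (V₁ * V₁ᵀ + V₂ * V₂ᵀ) *ᵥ x := by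
          rw [add_mulVec, ← mulVec_mulVec, hV₁x, mulVec_zero, zero_add, mulVec_mulVec]
      _ = x := by rw [hV, one_mulVec]
  have hy : V₂ᵀ *ᵥ x = 0 := hA _ (by rw [← mulVec_mulVec, hx_eq, hAx])
  rw [← hx_eq, hy, mulVec_zero]

/-- If `U₂ᵀ·[A_xx·V₂  A_xv]` has full column rank, then `col{U₂ᵀ·A_xx, V₁ᵀ}`
has full column rank. -/
theorem fcr_col_of_fcr_concat (m n r v : ℕ)
    (E : Matrix (Fin m) (Fin n) ℝ)
    (U₁ : Matrix (Fin m) (Fin r) ℝ) (U₂ : Matrix (Fin m) (Fin (m - r)) ℝ)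
    (V₁ : Matrix (Fin n) (Fin r) ℝ) (V₂ : Matrix (Fin n) (Fin (n - r)) ℝ)
    (S : Matrix (Fin r) (Fin r) ℝ)
    (hsvd : IsSVDPartition E U₁ U₂ V₁ V₂ S)
    (Axx : Matrix (Fin m) (Fin n) ℝ) (Axv : Matrix (Fin m) (Fin v) ℝ)
    (h : FCR (U₂ᵀ * Matrix.fromCols (Axx * V₂) Axv)) :
    FCR (Matrix.fromRows (U₂ᵀ * Axx) V₁ᵀ) := by
  obtain ⟨-, hrn, -, hV, -⟩ := hsvd
  have e : Fin n ≃ Fin r ⊕ Fin (n - r) :=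
    (finCongr (Nat.add_sub_cancel' hrn).symm).trans finSumFinEquiv.symm
  rw [mul_fromCols, ← Matrix.mul_assoc] at h
  exact fcr_fromRows_transpose_of_fcr_mul (mul_transpose_add_mul_transpose_eq_one e hV)
    h.of_fromCols_left
end
end

section
/- Let V = [V₁ V₂] be an n×n real orthogonal matrix, where V₁ has r columns and V₂ has n−r columns, and let M be any p×n real matrix. Then M·V₂ has full column rank if and only if the stacked matrix col{M, V₁ᵀ} has full column rank. -/
/-!
The orthogonality of `V = [V₁ V₂]` gives `V₁ᵀ V₂ = 0`, `V₂ᵀ V₂ = 1` and, `V` being square,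
`V₁ V₁ᵀ + V₂ V₂ᵀ = 1`. Hence `V₂` is injective with range `ker V₁ᵀ`, so `V₂` maps `ker (M V₂)`
isomorphically onto `ker M ∩ ker V₁ᵀ = ker col{M, V₁ᵀ}`: one kernel is trivial iff the other is.
-/

open Matrix

noncomputable section

namespace Matrix

open LinearMap

variable {R : Type*} [CommRing R] {l m n m₁ m₂ : Type*} [Fintype m] [Fintype n]

theorem ker_mulVecLin_fromRows (A : Matrix m₁ n R) (B : Matrix m₂ n R) :
    ker (fromRows A B).mulVecLin = ker A.mulVecLin ⊓ ker B.mulVecLin := by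
  ext v
  simp [fromRows_mulVec, ← Sum.elim_zero_zero, Sum.elim_eq_iff]

theorem ker_mulVecLin_eq_bot_of_mul_eq_one {A : Matrix m n R} {B : Matrix n m R}
    [DecidableEq m] (h : A * B = 1) : ker B.mulVecLin = ⊥ :=
  ker_eq_bot_of_inverse (g := A.mulVecLin) (by rw [← mulVecLin_mul, h, mulVecLin_one])

theorem ker_mulVecLin_mul_eq_bot_iff (A : Matrix l m R) {B : Matrix m n R}
    (hB : ker B.mulVecLin = ⊥) :
    ker (A * B).mulVecLin = ⊥ ↔ ker A.mulVecLin ⊓ range B.mulVecLin = ⊥ := by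
  rw [mulVecLin_mul, ker_comp, ← (Submodule.map_injective_of_injective (ker_eq_bot.mp hB)).eq_iff,
    Submodule.map_comap_eq, Submodule.map_bot, inf_comm]

theorem range_mulVecLin_eq_ker_mulVecLin {A : Matrix l m R} {B : Matrix m n R}
    {X : Matrix m l R} {Y : Matrix n m R} [Fintype l] [DecidableEq m] (hAB : A * B = 0)
    (h : X * A + B * Y = 1) :
    range B.mulVecLin = ker A.mulVecLin := by
  refine le_antisymm ?_ fun v hv => ⟨Y *ᵥ v, ?_⟩
  · rintro _ ⟨x, rfl⟩
    simp [mulVec_mulVec, hAB]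
  · have hv : A *ᵥ v = 0 := hv
    simpa [add_mulVec, ← mulVec_mulVec, hv] using congrArg (· *ᵥ v) h

theorem transpose_fromCols_mul_self_eq_one_iff {n₁ n₂ : Type*} [Fintype n₁] [Fintype n₂]
    [DecidableEq n₁] [DecidableEq n₂] (V₁ : Matrix m n₁ R) (V₂ : Matrix m n₂ R) :
    (fromCols V₁ V₂)ᵀ * fromCols V₁ V₂ = 1 ↔
      V₁ᵀ * V₁ = 1 ∧ V₁ᵀ * V₂ = 0 ∧ V₂ᵀ * V₁ = 0 ∧ V₂ᵀ * V₂ = 1 := by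
  rw [transpose_fromCols, fromRows_mul_fromCols, ← fromBlocks_one, fromBlocks_inj]

theorem fromCols_mul_transpose_self_eq_one {n₁ n₂ : Type*} [Fintype n₁] [Fintype n₂]
    [DecidableEq m] [DecidableEq n₁] [DecidableEq n₂] {V₁ : Matrix m n₁ R} {V₂ : Matrix m n₂ R}
    (e : m ≃ n₁ ⊕ n₂) (h : (fromCols V₁ V₂)ᵀ * fromCols V₁ V₂ = 1) :
    V₁ * V₁ᵀ + V₂ * V₂ᵀ = 1 := by
  rw [← fromCols_mul_fromRows, ← transpose_fromCols]
  exact (mul_eq_one_comm_of_equiv e.symm).mp h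

end Matrix

theorem fcr_iff_ker_mulVecLin_eq_bot {m n : Type*} [Fintype m] [Fintype n] (A : Matrix m n ℝ) :
    FCR A ↔ LinearMap.ker A.mulVecLin = ⊥ := by
  have h := LinearMap.finrank_range_add_finrank_ker A.mulVecLin
  rw [Module.finrank_fintype_fun_eq_card] at h
  rw [FCR, rank, ← Submodule.finrank_eq_zero]
  omega

/-- Let `V = [V₁ V₂]` be an `n × n` orthogonal matrix, `V₁` with `r` columns and
`V₂` with `n - r` columns, and `M` a `p × n` matrix. Then `M·V₂` has full column
rank iff `col{M, V₁ᵀ}` has full column rank. -/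
theorem mul_fcr_iff_fromRows_fcr (n r p : ℕ) (hr : r ≤ n)
    (V₁ : Matrix (Fin n) (Fin r) ℝ) (V₂ : Matrix (Fin n) (Fin (n - r)) ℝ)
    (hV : (Matrix.fromCols V₁ V₂)ᵀ * Matrix.fromCols V₁ V₂ = 1)
    (M : Matrix (Fin p) (Fin n) ℝ) :
    FCR (M * V₂) ↔ FCR (Matrix.fromRows M V₁ᵀ) := by
  obtain ⟨-, hV₁V₂, -, hV₂V₂⟩ := (transpose_fromCols_mul_self_eq_one_iff V₁ V₂).mp hV
  have hcompl : V₁ * V₁ᵀ + V₂ * V₂ᵀ = 1 :=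
    fromCols_mul_transpose_self_eq_one ((finCongr (Nat.add_sub_cancel' hr).symm).trans
      finSumFinEquiv.symm) hV
  rw [fcr_iff_ker_mulVecLin_eq_bot, fcr_iff_ker_mulVecLin_eq_bot, ker_mulVecLin_fromRows,
    ker_mulVecLin_mul_eq_bot_iff M (ker_mulVecLin_eq_bot_of_mul_eq_one hV₂V₂),
    range_mulVecLin_eq_ker_mulVecLin hV₁V₂ hcompl]
end
end
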